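/- Let G be a k × n matrix over ZMod 2 of rank k generating the binary linear [n,k]-code C with weight distribution (A_i)_{i=0}^{n}, and let the n input bits be independent and identically distributed with common 1-probability p satisfying 0 ≤ p < 1/2. Then the most probable output of the corrector is the all-zero vector, and the maximal output probability equals the bound exactly: max_{y} P_p[{x : G.mulVec x = y}] = P_p[{x : G.mulVec x = 0}] = 2^{−k} · Σ_{i=0}^{n} A_i · (1 − 2p)^i. -/

import Mathlib

/-!
Let `ψ` be the sign character of `ZMod 2`. Fourier inversion on `(ZMod 2)^k` writes the indicator
of `G x = y` as `2^{-k} ∑_u ψ(u ⬝ G x) ψ(u ⬝ y)`, and because the bits are independent the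
transform of the input distribution factorises over coordinates:
`∑_x ψ(c ⬝ x) P(x) = (1 - 2p)^{wt c}`. Hence
`P[G x = y] = 2^{-k} ∑_u ψ(u ⬝ y) (1 - 2p)^{wt(u G)}`. For `p ≤ 1/2` every weight
`(1 - 2p)^{wt(u G)}` is nonnegative, so the sum is largest when all signs are `+1`, i.e. at
`y = 0`. When `G` has full rank, `u ↦ u G` is a bijection onto the code, and grouping codewords
by weight turns the sum at `y = 0` into the weight enumerator.
-/

open Finset Matrix

open Classical in
/-- Probability of a set of bit-vectors under `n` independent identically distributed bits,
each equal to `1` with probability `p`. -/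
noncomputable def probIID {n : ℕ} (p : ℝ) (S : Set (Fin n → ZMod 2)) : ℝ :=
  ∑ x : Fin n → ZMod 2,
    if x ∈ S then p ^ hammingNorm x * (1 - p) ^ (n - hammingNorm x) else 0

lemma ZMod.eq_zero_or_eq_one_of_two : ∀ a : ZMod 2, a = 0 ∨ a = 1 := by decide

lemma ZMod.sum_univ_two {M : Type*} [AddCommMonoid M] (f : ZMod 2 → M) :
    ∑ b, f b = f 0 + f 1 :=
  Fin.sum_univ_two f

lemma AddChar.map_sum_eq_prod {ι A M : Type*} [AddCommMonoid A] [CommMonoid M]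
    (ψ : AddChar A M) (s : Finset ι) (f : ι → A) :
    ψ (∑ i ∈ s, f i) = ∏ i ∈ s, ψ (f i) :=
  map_prod ψ.toMonoidHom (fun i => Multiplicative.ofAdd (f i)) s

lemma pow_hammingNorm_mul_pow_eq_prod {ι β M : Type*} [Fintype ι] [Zero β] [DecidableEq β]
    [CommMonoid M] (a b : M) (x : ι → β) :
    a ^ hammingNorm x * b ^ (Fintype.card ι - hammingNorm x) =
      ∏ i, if x i = 0 then b else a := by
  rw [prod_ite, prod_const, prod_const, mul_comm, hammingNorm, ← card_univ,
    ← card_filter_add_card_filter_not (fun i => x i = 0), Nat.add_sub_cancel]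

noncomputable def signChar : AddChar (ZMod 2) ℝ where
  toFun b := if b = 0 then 1 else -1
  map_zero_eq_one' := if_pos rfl
  map_add_eq_mul' a b := by
    rcases a.eq_zero_or_eq_one_of_two with rfl | rfl <;>
      rcases b.eq_zero_or_eq_one_of_two with rfl | rfl <;> simp +decide

lemma signChar_le_one (b : ZMod 2) : signChar b ≤ 1 := by
  rcases b.eq_zero_or_eq_one_of_two with rfl | rfl <;> simp +decide [signChar]

section Fourier

variable {ι : Type*} [Fintype ι] [DecidableEq ι]

lemma sum_signChar_dotProduct_mul_prod (c : ι → ZMod 2) (w : ZMod 2 → ℝ) :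
    ∑ x : ι → ZMod 2, signChar (c ⬝ᵥ x) * ∏ i, w (x i) =
      ∏ i, ∑ b, signChar (c i * b) * w b := by
  simp only [Fintype.prod_sum, dotProduct, AddChar.map_sum_eq_prod, ← prod_mul_distrib]

lemma sum_signChar_dotProduct (c : ι → ZMod 2) :
    ∑ x : ι → ZMod 2, signChar (c ⬝ᵥ x) = if c = 0 then 2 ^ Fintype.card ι else 0 := by
  have factor (b : ZMod 2) : ∑ a, signChar (b * a) = if b = 0 then 2 else 0 := by
    rcases b.eq_zero_or_eq_one_of_two with rfl | rfl <;>
      simp +decide [ZMod.sum_univ_two, signChar]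
  have h := sum_signChar_dotProduct_mul_prod c 1
  simp only [Pi.one_apply, prod_const_one, mul_one, factor] at h
  rw [h, prod_ite_zero]
  simp [funext_iff]

lemma ite_eq_inv_mul_sum_signChar (a b : ι → ZMod 2) :
    (if a = b then (1 : ℝ) else 0) =
      (2 ^ Fintype.card ι)⁻¹ * ∑ u : ι → ZMod 2, signChar (u ⬝ᵥ a) * signChar (u ⬝ᵥ b) := by
  have hab : a + b = 0 ↔ a = b := by simp [funext_iff, CharTwo.add_eq_zero]
  simp only [← AddChar.map_add_eq_mul, ← dotProduct_add, dotProduct_comm _ (a + b),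
    sum_signChar_dotProduct, hab]
  split_ifs <;> simp

lemma sum_signChar_dotProduct_mul_bernoulli (p : ℝ) (c : ι → ZMod 2) :
    ∑ x : ι → ZMod 2, signChar (c ⬝ᵥ x) *
        (p ^ hammingNorm x * (1 - p) ^ (Fintype.card ι - hammingNorm x)) =
      (1 - 2 * p) ^ hammingNorm c := by
  have factor (b : ZMod 2) :
      ∑ a, signChar (b * a) * (if a = 0 then 1 - p else p) = if b = 0 then 1 else 1 - 2 * p := by
    rcases b.eq_zero_or_eq_one_of_two with rfl | rfl
    · simp +decide [ZMod.sum_univ_two, signChar]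
    · simp +decide [ZMod.sum_univ_two, signChar]
      ring
  simp only [pow_hammingNorm_mul_pow_eq_prod]
  rw [sum_signChar_dotProduct_mul_prod (w := fun a => if a = 0 then 1 - p else p)]
  simp only [factor]
  rw [← pow_hammingNorm_mul_pow_eq_prod, one_pow, mul_one]

end Fourier

lemma probIID_mulVec_eq {n k : ℕ} (G : Matrix (Fin k) (Fin n) (ZMod 2)) (p : ℝ)
    (y : Fin k → ZMod 2) :
    probIID p {x | G *ᵥ x = y} =
      (2 ^ k)⁻¹ * ∑ u : Fin k → ZMod 2,
        signChar (u ⬝ᵥ y) * (1 - 2 * p) ^ hammingNorm (u ᵥ* G) := by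
  set w : (Fin n → ZMod 2) → ℝ := fun x => p ^ hammingNorm x * (1 - p) ^ (n - hammingNorm x)
  calc probIID p {x | G *ᵥ x = y}
      = ∑ x, (if G *ᵥ x = y then 1 else 0) * w x := by
        simp only [probIID, Set.mem_ofPred_eq, ite_mul, one_mul, zero_mul]
        congr! -- `probIID` decides membership classically
    _ = ∑ x, (2 ^ k)⁻¹ * ∑ u, signChar (u ⬝ᵥ y) * (signChar ((u ᵥ* G) ⬝ᵥ x) * w x) := by
        refine sum_congr rfl fun x _ => ?_
        rw [ite_eq_inv_mul_sum_signChar, Fintype.card_fin, mul_assoc, sum_mul]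
        congr! 2 with u
        rw [dotProduct_mulVec]
        ring
    _ = (2 ^ k)⁻¹ * ∑ u, signChar (u ⬝ᵥ y) * (1 - 2 * p) ^ hammingNorm (u ᵥ* G) := by
        rw [← mul_sum, sum_comm]
        simp only [← mul_sum]
        congr! with u
        simpa using sum_signChar_dotProduct_mul_bernoulli p (u ᵥ* G)

lemma injective_vecMul_of_rank_eq_card {K m n : Type*} [Field K] [Fintype m] [Fintype n]
    {G : Matrix m n K} (hG : G.rank = Fintype.card m) : Function.Injective G.vecMul := by
  rw [vecMul_injective_iff, linearIndependent_iff_card_eq_finrank_span, ← hG,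
    rank_eq_finrank_span_row, Set.finrank]

open Classical in
lemma sum_vecMul_eq_sum_span_row {K m n M : Type*} [Field K] [Fintype K]
    [Fintype m] [DecidableEq m] [Fintype n] [DecidableEq n] [AddCommMonoid M]
    {G : Matrix m n K} (hG : G.rank = Fintype.card m) (f : (n → K) → M) :
    ∑ u : m → K, f (u ᵥ* G) = ∑ c with c ∈ Submodule.span K (Set.range G.row), f c := by
  rw [← sum_image fun u _ v _ h => injective_vecMul_of_rank_eq_card hG h]
  congr 1
  ext c
  simp [← range_vecMulLinear]

lemma sum_pow_hammingNorm_eq_sum_card {ι β R : Type*} [Fintype ι] [Zero β] [DecidableEq β]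
    [CommSemiring R] (s : Finset (ι → β)) (t : R) :
    ∑ c ∈ s, t ^ hammingNorm c =
      ∑ i ∈ range (Fintype.card ι + 1), #{c ∈ s | hammingNorm c = i} * t ^ i := by
  rw [← sum_fiberwise_of_maps_to (g := hammingNorm) (t := range (Fintype.card ι + 1))
    fun c _ => mem_range_succ_iff.mpr hammingNorm_le_card_fintype]
  refine sum_congr rfl fun i _ => ?_
  rw [sum_congr rfl fun c hc => by rw [(mem_filter.mp hc).2], sum_const, nsmul_eq_mul]

lemma sum_pow_hammingNorm_vecMul {K m n R : Type*} [Field K] [Fintype K] [DecidableEq K]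
    [Fintype m] [DecidableEq m] [Fintype n] [DecidableEq n] [CommSemiring R]
    {G : Matrix m n K} (hG : G.rank = Fintype.card m) (t : R) :
    ∑ u : m → K, t ^ hammingNorm (u ᵥ* G) =
      ∑ i ∈ range (Fintype.card n + 1),
        Nat.card {c : n → K // c ∈ Submodule.span K (Set.range G.row) ∧ hammingNorm c = i} *
          t ^ i := by
  classical
  rw [sum_vecMul_eq_sum_span_row hG fun c => t ^ hammingNorm c, sum_pow_hammingNorm_eq_sum_card]
  refine sum_congr rfl fun i _ => ?_
  rw [filter_filter, Nat.subtype_card _ fun _ => mem_filter_univ _]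

lemma probIID_mulVec_le_probIID_mulVec_zero {n k : ℕ} (G : Matrix (Fin k) (Fin n) (ZMod 2))
    {p : ℝ} (hp : p ≤ 1 / 2) (y : Fin k → ZMod 2) :
    probIID p {x | G *ᵥ x = y} ≤ probIID p {x | G *ᵥ x = 0} := by
  rw [probIID_mulVec_eq, probIID_mulVec_eq]
  gcongr with u
  · exact pow_nonneg (by linarith) _
  · simpa using signChar_le_one _

theorem corrector_iid_exact_general {n k : ℕ}
    (G : Matrix (Fin k) (Fin n) (ZMod 2)) (hG : G.rank = k)
    (A : ℕ → ℕ)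
    (hA : ∀ i, A i = Nat.card {c : Fin n → ZMod 2 //
      c ∈ Submodule.span (ZMod 2) (Set.range fun j => G j) ∧ hammingNorm c = i})
    (p : ℝ) (hp1 : p < 1 / 2) :
    (∀ y : Fin k → ZMod 2,
        probIID p {x | G.mulVec x = y} ≤ probIID p {x | G.mulVec x = 0}) ∧
    probIID p {x : Fin n → ZMod 2 | G.mulVec x = 0} =
      (2 : ℝ) ^ (-(k : ℝ)) *
        ∑ i ∈ Finset.range (n + 1), (A i : ℝ) * (1 - 2 * p) ^ i := by
  refine ⟨probIID_mulVec_le_probIID_mulVec_zero G hp1.le, ?_⟩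
  have hG' : G.rank = Fintype.card (Fin k) := by rw [hG, Fintype.card_fin]
  rw [probIID_mulVec_eq]
  simp only [dotProduct_zero, AddChar.map_zero_eq_one, one_mul]
  rw [sum_pow_hammingNorm_vecMul hG', Fintype.card_fin, Real.rpow_neg zero_le_two,
    Real.rpow_natCast, row_def]
  simp only [hA]

/-- For i.i.d. input bits with common 1-probability `0 ≤ p < 1/2`, the most
probable output of the linear corrector `x ↦ G.mulVec x` is the all-zero vector, and its
probability equals `2 ^ (-k) * ∑ i, A i * (1 - 2p) ^ i` exactly. -/
theorem corrector_iid_exact {n k : ℕ}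
    (G : Matrix (Fin k) (Fin n) (ZMod 2)) (hG : G.rank = k)
    (A : ℕ → ℕ)
    (hA : ∀ i, A i = Nat.card {c : Fin n → ZMod 2 //
      c ∈ Submodule.span (ZMod 2) (Set.range fun j => G j) ∧ hammingNorm c = i})
    (p : ℝ) (hp0 : 0 ≤ p) (hp1 : p < 1 / 2) :
    (∀ y : Fin k → ZMod 2,
        probIID p {x | G.mulVec x = y} ≤ probIID p {x | G.mulVec x = 0}) ∧
    probIID p {x : Fin n → ZMod 2 | G.mulVec x = 0} =
      (2 : ℝ) ^ (-(k : ℝ)) *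
        ∑ i ∈ Finset.range (n + 1), (A i : ℝ) * (1 - 2 * p) ^ i :=
  corrector_iid_exact_general G hG A hA p hp1
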